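/- arXiv:1908.10831 — 5 statements merged into one kernel-verified Lean document; each statement's English description precedes it below -/
import Mathlib

section
/- Let p ∈ (0,1) and h : ℝ^d × X → ℝ. Then for any w, the squared-loss AUC objective E[(1 - h(w;x) + h(w;x'))² | y=1, y'=-1] equals 1 + (1/(p(1-p))) · min_{(a,b)∈ℝ²} max_{α∈ℝ} E_z[F(w,a,b,α;z)], where F(w,a,b,α;z) = (1-p)(h(w;x)-a)²·1[y=1] + p(h(w;x)-b)²·1[y=-1] + 2(1+α)(p·h(w;x)·1[y=-1] - (1-p)·h(w;x)·1[y=1]) - p(1-p)α², with (x,y) and (x',y') drawn i.i.d. from a distribution P with Pr(y=1)=p. -/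
open MeasureTheory

private lemma sup_quad (c d e : ℝ) (he : 0 < e) :
    (⨆ α : ℝ, c + d * α - e * α ^ 2) = c + d ^ 2 / (4 * e) := by
  have hbound : ∀ α : ℝ, c + d * α - e * α ^ 2 ≤ c + d ^ 2 / (4 * e) := by
    intro α
    have h1 : d * α - e * α ^ 2 ≤ d ^ 2 / (4 * e) := by
      rw [le_div_iff₀ (by linarith : (0:ℝ) < 4 * e)]
      nlinarith [sq_nonneg (d - 2 * e * α)]
    linarith
  apply le_antisymm (ciSup_le hbound)
  have hle := le_ciSup (f := fun α : ℝ => c + d * α - e * α ^ 2)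
    ⟨c + d ^ 2 / (4 * e), by rintro x ⟨α, rfl⟩; exact hbound α⟩ (d / (2 * e))
  calc c + d ^ 2 / (4 * e) = c + d * (d / (2 * e)) - e * (d / (2 * e)) ^ 2 := by
        field_simp; ring
    _ ≤ _ := hle

private lemma inf_quad (k e a0 b0 : ℝ) (he : 0 ≤ e) :
    (⨅ ab : ℝ × ℝ, k + e * (ab.1 - a0) ^ 2 + e * (ab.2 - b0) ^ 2) = k := by
  have hbound : ∀ ab : ℝ × ℝ, k ≤ k + e * (ab.1 - a0) ^ 2 + e * (ab.2 - b0) ^ 2 := by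
    intro ab; nlinarith [sq_nonneg (ab.1 - a0), sq_nonneg (ab.2 - b0)]
  apply le_antisymm
  · have hle := ciInf_le (f := fun ab : ℝ × ℝ => k + e * (ab.1 - a0) ^ 2 + e * (ab.2 - b0) ^ 2)
      ⟨k, by rintro x ⟨ab, rfl⟩; exact hbound ab⟩ ((a0, b0) : ℝ × ℝ)
    simpa using hle
  · exact le_ciInf hbound

private lemma integrable_of_bdd {Ω : Type*} [MeasurableSpace Ω] {P : Measure Ω}
    [IsFiniteMeasure P] {f : Ω → ℝ} (hf : Measurable f) (C : ℝ) (h : ∀ ω, |f ω| ≤ C) :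
    Integrable f P :=
  (integrable_const C).mono' hf.aestronglyMeasurable
    (Filter.Eventually.of_forall fun ω => by simpa using h ω)

/-- Min-max (saddle point) reformulation of the squared-loss AUC objective. -/
theorem stmt_0 {Ω : Type*} [MeasurableSpace Ω] (P : Measure Ω) [IsProbabilityMeasure P]
    (H : Ω → ℝ) (y : Ω → ℤ) (p : ℝ) (hp0 : 0 < p) (hp1 : p < 1)
    (hH : Measurable H) (hy : Measurable y)
    (hH0 : ∀ ω, 0 ≤ H ω) (hH1 : ∀ ω, H ω ≤ 1)
    (hlab : ∀ ω, y ω = 1 ∨ y ω = -1)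
    (hpy : (P {ω | y ω = 1}).toReal = p) :
    (∫ ω, ∫ ω', (if y ω = 1 ∧ y ω' = -1 then (1 - H ω + H ω') ^ 2 else 0) ∂P ∂P)
        / (p * (1 - p))
      = 1 + (⨅ ab : ℝ × ℝ, ⨆ α : ℝ, ∫ ω,
          ((1 - p) * (H ω - ab.1) ^ 2 * (if y ω = 1 then (1:ℝ) else 0)
            + p * (H ω - ab.2) ^ 2 * (if y ω = -1 then (1:ℝ) else 0)
            + 2 * (1 + α) * (p * H ω * (if y ω = -1 then (1:ℝ) else 0)
                - (1 - p) * H ω * (if y ω = 1 then (1:ℝ) else 0))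
            - p * (1 - p) * α ^ 2) ∂P) / (p * (1 - p)) := by
  have hq0 : 0 < 1 - p := by linarith
  have hpq : 0 < p * (1 - p) := mul_pos hp0 hq0
  have hpne : p ≠ 0 := ne_of_gt hp0
  have hqne : (1 - p) ≠ 0 := ne_of_gt hq0
  -- measurability of indicators
  have mIp : Measurable fun ω => (if y ω = 1 then (1:ℝ) else 0) :=
    Measurable.ite (hy (measurableSet_singleton 1)) measurable_const measurable_const
  have mIm : Measurable fun ω => (if y ω = -1 then (1:ℝ) else 0) :=
    Measurable.ite (hy (measurableSet_singleton (-1))) measurable_const measurable_const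
  -- integrability of the six base functions
  have J1 : Integrable (fun ω => (if y ω = 1 then (1:ℝ) else 0)) P :=
    integrable_of_bdd mIp 1 (fun ω => by split <;> simp)
  have J4 : Integrable (fun ω => (if y ω = -1 then (1:ℝ) else 0)) P :=
    integrable_of_bdd mIm 1 (fun ω => by split <;> simp)
  have J2 : Integrable (fun ω => H ω * (if y ω = 1 then (1:ℝ) else 0)) P := by
    refine integrable_of_bdd (hH.mul mIp) 1 (fun ω => ?_)
    have h0 := hH0 ω; have h1 := hH1 ω
    split
    · rw [mul_one, abs_of_nonneg h0]; exact h1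
    · simp
  have J5 : Integrable (fun ω => H ω * (if y ω = -1 then (1:ℝ) else 0)) P := by
    refine integrable_of_bdd (hH.mul mIm) 1 (fun ω => ?_)
    have h0 := hH0 ω; have h1 := hH1 ω
    split
    · rw [mul_one, abs_of_nonneg h0]; exact h1
    · simp
  have J3 : Integrable (fun ω => H ω ^ 2 * (if y ω = 1 then (1:ℝ) else 0)) P := by
    refine integrable_of_bdd ((hH.pow_const 2).mul mIp) 1 (fun ω => ?_)
    have h0 := hH0 ω; have h1 := hH1 ω
    split
    · rw [mul_one, abs_of_nonneg (by positivity)]; nlinarith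
    · simp
  have J6 : Integrable (fun ω => H ω ^ 2 * (if y ω = -1 then (1:ℝ) else 0)) P := by
    refine integrable_of_bdd ((hH.pow_const 2).mul mIm) 1 (fun ω => ?_)
    have h0 := hH0 ω; have h1 := hH1 ω
    split
    · rw [mul_one, abs_of_nonneg (by positivity)]; nlinarith
    · simp
  -- ∫ I₊ = p
  have hIp : (∫ ω, (if y ω = 1 then (1:ℝ) else 0) ∂P) = p := by
    have heq : (fun ω => if y ω = 1 then (1:ℝ) else 0)
        = fun ω => Set.indicator {ω | y ω = 1} (1 : Ω → ℝ) ω := by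
      funext ω; simp [Set.indicator_apply]
    rw [heq, integral_indicator_one (show MeasurableSet {ω | y ω = 1} from hy (measurableSet_singleton 1))]; exact hpy
  -- ∫ I₋ = 1 - p
  have hIm : (∫ ω, (if y ω = -1 then (1:ℝ) else 0) ∂P) = 1 - p := by
    have heq : (fun ω => if y ω = -1 then (1:ℝ) else 0)
        = fun ω => 1 - (if y ω = 1 then (1:ℝ) else 0) := by
      funext ω; rcases hlab ω with h | h <;> norm_num [h]
    rw [heq, integral_sub (integrable_const 1) J1, integral_const, hIp]
    simp
  -- moments
  set M1 : ℝ := ∫ ω, H ω * (if y ω = 1 then (1:ℝ) else 0) ∂P with hM1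
  set S1 : ℝ := ∫ ω, H ω ^ 2 * (if y ω = 1 then (1:ℝ) else 0) ∂P with hS1
  set M2 : ℝ := ∫ ω, H ω * (if y ω = -1 then (1:ℝ) else 0) ∂P with hM2
  set S2 : ℝ := ∫ ω, H ω ^ 2 * (if y ω = -1 then (1:ℝ) else 0) ∂P with hS2
  -- master integral computation
  have master : ∀ c0 c1 c2 d0 d1 d2 e : ℝ,
      (∫ ω, (c0 * (if y ω = 1 then (1:ℝ) else 0)
          + c1 * (H ω * (if y ω = 1 then (1:ℝ) else 0))
          + c2 * (H ω ^ 2 * (if y ω = 1 then (1:ℝ) else 0))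
          + d0 * (if y ω = -1 then (1:ℝ) else 0)
          + d1 * (H ω * (if y ω = -1 then (1:ℝ) else 0))
          + d2 * (H ω ^ 2 * (if y ω = -1 then (1:ℝ) else 0)) + e) ∂P)
        = c0 * p + c1 * M1 + c2 * S1 + d0 * (1 - p) + d1 * M2 + d2 * S2 + e := by
    intro c0 c1 c2 d0 d1 d2 e
    have A1 := J1.const_mul c0
    have A2 := J2.const_mul c1
    have A3 := J3.const_mul c2
    have A4 := J4.const_mul d0
    have A5 := J5.const_mul d1
    have A6 := J6.const_mul d2
    have B12 : Integrable (fun ω => c0 * (if y ω = 1 then (1:ℝ) else 0)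
        + c1 * (H ω * (if y ω = 1 then (1:ℝ) else 0))) P := A1.add A2
    have B13 : Integrable (fun ω => c0 * (if y ω = 1 then (1:ℝ) else 0)
        + c1 * (H ω * (if y ω = 1 then (1:ℝ) else 0))
        + c2 * (H ω ^ 2 * (if y ω = 1 then (1:ℝ) else 0))) P := B12.add A3
    have B14 : Integrable (fun ω => c0 * (if y ω = 1 then (1:ℝ) else 0)
        + c1 * (H ω * (if y ω = 1 then (1:ℝ) else 0))
        + c2 * (H ω ^ 2 * (if y ω = 1 then (1:ℝ) else 0))
        + d0 * (if y ω = -1 then (1:ℝ) else 0)) P := B13.add A4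
    have B15 : Integrable (fun ω => c0 * (if y ω = 1 then (1:ℝ) else 0)
        + c1 * (H ω * (if y ω = 1 then (1:ℝ) else 0))
        + c2 * (H ω ^ 2 * (if y ω = 1 then (1:ℝ) else 0))
        + d0 * (if y ω = -1 then (1:ℝ) else 0)
        + d1 * (H ω * (if y ω = -1 then (1:ℝ) else 0))) P := B14.add A5
    have B16 : Integrable (fun ω => c0 * (if y ω = 1 then (1:ℝ) else 0)
        + c1 * (H ω * (if y ω = 1 then (1:ℝ) else 0))
        + c2 * (H ω ^ 2 * (if y ω = 1 then (1:ℝ) else 0))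
        + d0 * (if y ω = -1 then (1:ℝ) else 0)
        + d1 * (H ω * (if y ω = -1 then (1:ℝ) else 0))
        + d2 * (H ω ^ 2 * (if y ω = -1 then (1:ℝ) else 0))) P := B15.add A6
    rw [integral_add B16 (integrable_const e), integral_add B15 A6, integral_add B14 A5,
      integral_add B13 A4, integral_add B12 A3, integral_add A1 A2,
      integral_const_mul, integral_const_mul, integral_const_mul, integral_const_mul,
      integral_const_mul, integral_const_mul, integral_const,
      hIp, hIm, ← hM1, ← hS1, ← hM2, ← hS2]
    simp
  -- inner integral of the LHS
  have hInner : ∀ ω, (∫ ω', (if y ω = 1 ∧ y ω' = -1 then (1 - H ω + H ω') ^ 2 else 0) ∂P)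
      = (if y ω = 1 then (1:ℝ) else 0)
        * ((1 - H ω) ^ 2 * (1 - p) + 2 * (1 - H ω) * M2 + S2) := by
    intro ω
    by_cases hcase : y ω = 1
    · have e3 : (fun ω' => if y ω = 1 ∧ y ω' = -1 then (1 - H ω + H ω') ^ 2 else 0)
          = fun ω' => (0 * (if y ω' = 1 then (1:ℝ) else 0)
            + 0 * (H ω' * (if y ω' = 1 then (1:ℝ) else 0))
            + 0 * (H ω' ^ 2 * (if y ω' = 1 then (1:ℝ) else 0))
            + ((1 - H ω) ^ 2) * (if y ω' = -1 then (1:ℝ) else 0)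
            + (2 * (1 - H ω)) * (H ω' * (if y ω' = -1 then (1:ℝ) else 0))
            + 1 * (H ω' ^ 2 * (if y ω' = -1 then (1:ℝ) else 0)) + 0) := by
        funext ω'
        by_cases h' : y ω' = -1
        · simp only [hcase, h', true_and, if_true]; ring
        · simp [hcase, h']
      rw [e3, master 0 0 0 ((1 - H ω) ^ 2) (2 * (1 - H ω)) 1 0]
      simp only [hcase, if_true]
      ring
    · simp [hcase]
  -- value of the LHS double integral
  have hL : (∫ ω, ∫ ω', (if y ω = 1 ∧ y ω' = -1 then (1 - H ω + H ω') ^ 2 else 0) ∂P ∂P)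
      = ((1 - p) + 2 * M2 + S2) * p + (-2 * (1 - p) - 2 * M2) * M1 + (1 - p) * S1
        + 0 * (1 - p) + 0 * M2 + 0 * S2 + 0 := by
    refine (integral_congr_ae (Filter.Eventually.of_forall fun ω => ?_)).trans
      (master ((1 - p) + 2 * M2 + S2) (-2 * (1 - p) - 2 * M2) (1 - p) 0 0 0 0)
    exact (hInner ω).trans (by ring)
  -- value of the RHS inner integral
  have hG : ∀ a b α : ℝ,
      (∫ ω, ((1 - p) * (H ω - a) ^ 2 * (if y ω = 1 then (1:ℝ) else 0)
          + p * (H ω - b) ^ 2 * (if y ω = -1 then (1:ℝ) else 0)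
          + 2 * (1 + α) * (p * H ω * (if y ω = -1 then (1:ℝ) else 0)
              - (1 - p) * H ω * (if y ω = 1 then (1:ℝ) else 0))
          - p * (1 - p) * α ^ 2) ∂P)
      = ((1 - p) * a ^ 2) * p + (-2 * a * (1 - p) - 2 * (1 + α) * (1 - p)) * M1
        + (1 - p) * S1 + (p * b ^ 2) * (1 - p) + (-2 * b * p + 2 * (1 + α) * p) * M2
        + p * S2 + (-(p * (1 - p) * α ^ 2)) := by
    intro a b α
    refine (integral_congr_ae (Filter.Eventually.of_forall fun ω => by ring)).trans
      (master ((1 - p) * a ^ 2) (-2 * a * (1 - p) - 2 * (1 + α) * (1 - p)) (1 - p)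
        (p * b ^ 2) (-2 * b * p + 2 * (1 + α) * p) p (-(p * (1 - p) * α ^ 2)))
  -- closed form of the min-max
  have h5 : (⨅ ab : ℝ × ℝ, ⨆ α : ℝ, ∫ ω,
        ((1 - p) * (H ω - ab.1) ^ 2 * (if y ω = 1 then (1:ℝ) else 0)
          + p * (H ω - ab.2) ^ 2 * (if y ω = -1 then (1:ℝ) else 0)
          + 2 * (1 + α) * (p * H ω * (if y ω = -1 then (1:ℝ) else 0)
              - (1 - p) * H ω * (if y ω = 1 then (1:ℝ) else 0))
          - p * (1 - p) * α ^ 2) ∂P)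
      = (2 * (p * M2 - (1 - p) * M1)) ^ 2 / (4 * (p * (1 - p)))
        - (1 - p) * M1 ^ 2 / p - p * M2 ^ 2 / (1 - p)
        - 2 * (1 - p) * M1 + (1 - p) * S1 + 2 * p * M2 + p * S2 := by
    have e1 : ∀ ab : ℝ × ℝ, (⨆ α : ℝ, ∫ ω,
        ((1 - p) * (H ω - ab.1) ^ 2 * (if y ω = 1 then (1:ℝ) else 0)
          + p * (H ω - ab.2) ^ 2 * (if y ω = -1 then (1:ℝ) else 0)
          + 2 * (1 + α) * (p * H ω * (if y ω = -1 then (1:ℝ) else 0)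
              - (1 - p) * H ω * (if y ω = 1 then (1:ℝ) else 0))
          - p * (1 - p) * α ^ 2) ∂P)
        = ((2 * (p * M2 - (1 - p) * M1)) ^ 2 / (4 * (p * (1 - p)))
            - (1 - p) * M1 ^ 2 / p - p * M2 ^ 2 / (1 - p)
            - 2 * (1 - p) * M1 + (1 - p) * S1 + 2 * p * M2 + p * S2)
          + (p * (1 - p)) * (ab.1 - M1 / p) ^ 2
          + (p * (1 - p)) * (ab.2 - M2 / (1 - p)) ^ 2 := by
      intro ab
      have step1 : (⨆ α : ℝ, ∫ ω,
          ((1 - p) * (H ω - ab.1) ^ 2 * (if y ω = 1 then (1:ℝ) else 0)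
            + p * (H ω - ab.2) ^ 2 * (if y ω = -1 then (1:ℝ) else 0)
            + 2 * (1 + α) * (p * H ω * (if y ω = -1 then (1:ℝ) else 0)
                - (1 - p) * H ω * (if y ω = 1 then (1:ℝ) else 0))
            - p * (1 - p) * α ^ 2) ∂P)
          = ⨆ α : ℝ, (((1 - p) * ab.1 ^ 2 * p + (-2 * ab.1 * (1 - p) - 2 * (1 - p)) * M1
              + (1 - p) * S1 + p * ab.2 ^ 2 * (1 - p) + (-2 * ab.2 * p + 2 * p) * M2
              + p * S2)
            + (2 * (p * M2 - (1 - p) * M1)) * α - (p * (1 - p)) * α ^ 2) :=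
        iSup_congr fun α => (hG ab.1 ab.2 α).trans (by ring)
      rw [step1, sup_quad _ _ _ hpq]
      field_simp
      ring
    exact (iInf_congr e1).trans
      (inf_quad _ (p * (1 - p)) (M1 / p) (M2 / (1 - p)) hpq.le)
  rw [hL, h5]
  field_simp
  ring
end

section
/- Suppose φ : ℝ^{d+2} → ℝ is defined by φ(w,a,b) and satisfies: (i) φ(w,a,b) is 2·min(p,1-p)-strongly convex in (a,b) for each fixed w; (ii) the function w ↦ min_{a,b} φ(w,a,b) satisfies the PL condition with constant μ' > 0, i.e., μ'(min_{a,b}φ(w,a,b) - inf φ) ≤ (1/2)‖∇_w min_{a,b}φ(w,a,b)‖²; (iii) ∇_w φ(w,a,b) is 2L̃-Lipschitz in (a,b). Then φ satisfies the PL condition: μ(φ(v) - inf φ) ≤ (1/2)‖∇φ(v)‖² for all v = (w,a,b), with μ = 1/max(1/(2min(p,1-p)) + 2L̃²/(μ'·min(p²,(1-p)²)), 2/μ'). -/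
open scoped RealInnerProductSpace

open Filter Set

section Aux

variable {F : Type*} [NormedAddCommGroup F] [InnerProductSpace ℝ F] [CompleteSpace F]

/-- First-order condition for a differentiable strongly convex function. -/
lemma aux_first_order {σ : ℝ} {f : F → ℝ} (hf : Differentiable ℝ f)
    (hsc : StrongConvexOn Set.univ σ f) (x y : F) :
    f x + ⟪gradient f x, y - x⟫ + σ / 2 * ‖y - x‖ ^ 2 ≤ f y := by
  set v := y - x with hv
  have hfd : HasFDerivAt f (InnerProductSpace.toDual ℝ F (gradient f x)) x :=
    hasGradientAt_iff_hasFDerivAt.mp (hf x).hasGradientAt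
  have hline : HasDerivAt (fun t : ℝ => x + t • v) v 0 := by
    simpa using ((hasDerivAt_id (0 : ℝ)).smul_const v).const_add x
  have h0 : x + (0 : ℝ) • v = x := by simp
  have hq : HasDerivAt (fun t : ℝ => f (x + t • v)) ⟪gradient f x, v⟫ 0 := by
    have := (h0 ▸ hfd).comp_hasDerivAt 0 hline
    simpa [InnerProductSpace.toDual_apply_apply, Function.comp_def] using this
  have hslope : Tendsto (slope (fun t : ℝ => f (x + t • v)) 0) (nhdsWithin 0 (Set.Ioi 0))
      (nhds ⟪gradient f x, v⟫) := by
    refine (hasDerivAt_iff_tendsto_slope.mp hq).mono_left (nhdsWithin_mono 0 ?_)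
    intro t ht
    exact ne_of_gt ht
  have hrt : Tendsto (fun t : ℝ => f y - f x - (1 - t) * (σ / 2 * ‖x - y‖ ^ 2))
      (nhdsWithin 0 (Set.Ioi 0)) (nhds (f y - f x - σ / 2 * ‖x - y‖ ^ 2)) := by
    have hc : Continuous (fun t : ℝ => f y - f x - (1 - t) * (σ / 2 * ‖x - y‖ ^ 2)) := by
      fun_prop
    have h := (hc.tendsto 0).mono_left (nhdsWithin_le_nhds (s := Set.Ioi (0:ℝ)))
    simpa using h
  have hev : ∀ᶠ t in nhdsWithin (0:ℝ) (Set.Ioi 0), slope (fun t : ℝ => f (x + t • v)) 0 t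
      ≤ f y - f x - (1 - t) * (σ / 2 * ‖x - y‖ ^ 2) := by
    filter_upwards [Ioc_mem_nhdsGT_of_mem (⟨le_rfl, one_pos⟩ : (0:ℝ) ∈ Set.Ico 0 1)] with t ht
    have hcvx := hsc.2 (Set.mem_univ x) (Set.mem_univ y)
      (show (0:ℝ) ≤ 1 - t by linarith [ht.2]) ht.1.le (show (1 - t) + t = 1 by ring)
    have hpt : (1 - t) • x + t • y = x + t • v := by
      rw [hv, smul_sub, sub_smul, one_smul]; abel
    rw [hpt] at hcvx
    simp only [smul_eq_mul] at hcvx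
    have hs : slope (fun t : ℝ => f (x + t • v)) 0 t = (f (x + t • v) - f x) / t := by
      rw [slope_def_field]; simp
    rw [hs, div_le_iff₀ ht.1]
    nlinarith [hcvx, ht.1]
  have hlim := le_of_tendsto_of_tendsto hslope hrt hev
  have hn : ‖x - y‖ = ‖y - x‖ := norm_sub_rev x y
  rw [hn] at hlim
  linarith [hlim]

/-- PL inequality from strong convexity. -/
lemma aux_pl {σ : ℝ} (hσ : 0 < σ) {f : F → ℝ} (hf : Differentiable ℝ f)
    (hsc : StrongConvexOn Set.univ σ f) {z : F} (hz : ∀ y, f z ≤ f y) (x : F) :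
    σ * (f x - f z) ≤ 1 / 2 * ‖gradient f x‖ ^ 2 := by
  have h1 := aux_first_order hf hsc x z
  have h2 : -(‖gradient f x‖ * ‖z - x‖) ≤ ⟪gradient f x, z - x⟫ := by
    have ha := abs_real_inner_le_norm (gradient f x) (z - x)
    have hb := neg_abs_le ⟪gradient f x, z - x⟫
    linarith
  have h3 : f x - f z ≤ ‖gradient f x‖ * ‖z - x‖ - σ / 2 * ‖z - x‖ ^ 2 := by linarith
  nlinarith [mul_le_mul_of_nonneg_left h3 hσ.le,
    sq_nonneg (‖gradient f x‖ - σ * ‖z - x‖)]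

/-- Distance to the minimizer is controlled by the gradient norm. -/
lemma aux_dist {σ : ℝ} (hσ : 0 < σ) {f : F → ℝ} (hf : Differentiable ℝ f)
    (hsc : StrongConvexOn Set.univ σ f) {z : F} (hz : ∀ y, f z ≤ f y) (x : F) :
    σ * ‖x - z‖ ≤ ‖gradient f x‖ := by
  have hz0 : gradient f z = 0 := by
    have hlm : IsLocalMin f z := Filter.Eventually.of_forall hz
    have h := hlm.fderiv_eq_zero
    unfold gradient
    rw [h]; simp
  have h1 := aux_first_order hf hsc x z
  have h2 := aux_first_order hf hsc z x
  rw [hz0] at h2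
  simp only [inner_zero_left, add_zero, zero_add] at h2
  have hn : ‖z - x‖ = ‖x - z‖ := norm_sub_rev z x
  rw [hn] at h1
  have ha : |⟪gradient f x, z - x⟫| ≤ ‖gradient f x‖ * ‖x - z‖ := by
    have := abs_real_inner_le_norm (gradient f x) (z - x)
    rwa [hn] at this
  have hb := neg_le_abs ⟪gradient f x, z - x⟫
  rcases eq_or_lt_of_le (norm_nonneg (x - z)) with h0 | h0
  · rw [← h0, mul_zero]; exact norm_nonneg _
  · have key : σ * ‖x - z‖ * ‖x - z‖ ≤ ‖gradient f x‖ * ‖x - z‖ := by nlinarith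
    exact le_of_mul_le_mul_right key h0

end Aux


/-- Pure arithmetic combination step. -/
lemma aux_arith (m mu L M X1 X2 A B G : ℝ) (hm : 0 < m) (hmu : 0 < mu) (hL : 0 < L)
    (hM1 : 1 / (2 * m) + 2 * L ^ 2 / (mu * m ^ 2) ≤ M) (hM2 : 2 / mu ≤ M)
    (hA : 0 ≤ A) (hB : 0 ≤ B) (hG : 0 ≤ G)
    (f1 : 2 * m * X1 ≤ 1 / 2 * B ^ 2) (f2 : mu * X2 ≤ 1 / 2 * G ^ 2)
    (f5 : m * G ≤ m * A + L * B) :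
    X1 + X2 ≤ 1 / 2 * (A ^ 2 + B ^ 2) * M := by
  have f7 : m ^ 2 * G ^ 2 ≤ 2 * m ^ 2 * A ^ 2 + 2 * L ^ 2 * B ^ 2 := by
    nlinarith [mul_self_le_mul_self (mul_nonneg hm.le hG) f5, sq_nonneg (m * A - L * B)]
  have d1 : X1 ≤ 1 / (4 * m) * B ^ 2 := by
    rw [show (1:ℝ) / (4 * m) * B ^ 2 = (1 / 2 * B ^ 2) / (2 * m) by
        rw [eq_div_iff (ne_of_gt (by positivity : (0:ℝ) < 2 * m))]; field_simp; ring,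
      le_div_iff₀ (by positivity : (0:ℝ) < 2 * m)]
    nlinarith [f1]
  have d2 : X2 ≤ 1 / mu * A ^ 2 + L ^ 2 / (mu * m ^ 2) * B ^ 2 := by
    rw [show (1:ℝ) / mu * A ^ 2 + L ^ 2 / (mu * m ^ 2) * B ^ 2
        = (m ^ 2 * A ^ 2 + L ^ 2 * B ^ 2) / (mu * m ^ 2) by
          rw [eq_div_iff (ne_of_gt (by positivity : (0:ℝ) < mu * m ^ 2))]; field_simp,
      le_div_iff₀ (by positivity : (0:ℝ) < mu * m ^ 2)]
    nlinarith [mul_le_mul_of_nonneg_left f2 (sq_nonneg m), f7]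
  have d3 : 1 / mu * A ^ 2 ≤ M / 2 * A ^ 2 := by
    apply mul_le_mul_of_nonneg_right _ (sq_nonneg A)
    have e1 : (2:ℝ) / mu = 2 * (1 / mu) := by ring
    rw [e1] at hM2
    linarith
  have d4 : 1 / (4 * m) * B ^ 2 + L ^ 2 / (mu * m ^ 2) * B ^ 2 ≤ M / 2 * B ^ 2 := by
    have e1 : (1:ℝ) / (2 * m) = 2 * (1 / (4 * m)) := by ring
    have e2 : (2:ℝ) * L ^ 2 / (mu * m ^ 2) = 2 * (L ^ 2 / (mu * m ^ 2)) := by ring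
    rw [e1, e2] at hM1
    have hc : 1 / (4 * m) + L ^ 2 / (mu * m ^ 2) ≤ M / 2 := by linarith
    nlinarith [mul_le_mul_of_nonneg_right hc (sq_nonneg B)]
  nlinarith [d1, d2, d3, d4]

/-- PL condition transfer: if `min_{a,b} φ(w,a,b)` satisfies PL with constant `μ'`,
`φ(w,·)` is `2 min(p,1-p)`-strongly convex and `∇_w φ` is `2L̃`-Lipschitz in `(a,b)`,
then `φ` satisfies PL with the stated constant `μ`. -/
theorem stmt_3 {d : ℕ} (p Ltil μ' : ℝ) (hp0 : 0 < p) (hp1 : p < 1)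
    (hLtil : 0 < Ltil) (hμ' : 0 < μ')
    (φ : EuclideanSpace ℝ (Fin d) → EuclideanSpace ℝ (Fin 2) → ℝ)
    (hdiffab : ∀ w, Differentiable ℝ (φ w))
    (hdiffw : ∀ ab, Differentiable ℝ (fun w => φ w ab))
    (hsc : ∀ w, StrongConvexOn Set.univ (2 * min p (1 - p)) (φ w))
    (habmin : ∀ w, ∃! ab, IsMinOn (φ w) Set.univ ab)
    (w0 : EuclideanSpace ℝ (Fin d)) (ab0 : EuclideanSpace ℝ (Fin 2))
    (hglobalmin : ∀ w ab, φ w0 ab0 ≤ φ w ab)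
    (hPL : ∀ w, μ' * ((⨅ ab, φ w ab) - φ w0 ab0)
        ≤ (1 / 2) * ‖gradient (fun w => ⨅ ab, φ w ab) w‖ ^ 2)
    (hlip : ∀ w ab ab',
        ‖gradient (fun w => φ w ab) w - gradient (fun w => φ w ab') w‖
          ≤ 2 * Ltil * ‖ab - ab'‖) :
    ∀ w ab,
      (1 / max (1 / (2 * min p (1 - p)) + 2 * Ltil ^ 2 / (μ' * min (p ^ 2) ((1 - p) ^ 2)))
          (2 / μ')) * (φ w ab - φ w0 ab0)
        ≤ (1 / 2) * (‖gradient (fun w => φ w ab) w‖ ^ 2 + ‖gradient (φ w) ab‖ ^ 2) := by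
  intro w ab
  have hm : 0 < min p (1 - p) := lt_min hp0 (by linarith)
  set m := min p (1 - p) with hmdef
  have hms : min (p ^ 2) ((1 - p) ^ 2) = m ^ 2 := by
    rcases le_total p (1 - p) with h | h
    · rw [hmdef, min_eq_left h, min_eq_left (by nlinarith)]
    · rw [hmdef, min_eq_right h, min_eq_right (by nlinarith)]
  rw [hms]
  set M := max (1 / (2 * m) + 2 * Ltil ^ 2 / (μ' * m ^ 2)) (2 / μ') with hMdef
  have hM1 : 1 / (2 * m) + 2 * Ltil ^ 2 / (μ' * m ^ 2) ≤ M := le_max_left _ _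
  have hM2 : 2 / μ' ≤ M := le_max_right _ _
  have hMpos : 0 < M := lt_of_lt_of_le (by positivity) hM2
  -- bounded below
  have hbdd : ∀ w', BddBelow (Set.range (φ w')) := by
    intro w'
    refine ⟨φ w0 ab0, ?_⟩
    rintro y ⟨ab', rfl⟩
    exact hglobalmin w' ab'
  obtain ⟨abs, habs, -⟩ := habmin w
  have habsmin : ∀ y, φ w abs ≤ φ w y := fun y => habs (Set.mem_univ y)
  have hgw : (⨅ ab', φ w ab') = φ w abs :=
    le_antisymm (ciInf_le (hbdd w) abs) (le_ciInf habsmin)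
  have hglb : ∀ w', φ w0 ab0 ≤ ⨅ ab', φ w' ab' := fun w' => le_ciInf (hglobalmin w')
  set A := ‖gradient (fun w' => φ w' ab) w‖ with hA
  set B := ‖gradient (φ w) ab‖ with hB
  -- strong convexity consequences in ab
  have f1 : (2 * m) * (φ w ab - φ w abs) ≤ 1 / 2 * B ^ 2 :=
    aux_pl (by positivity) (hdiffab w) (hsc w) habsmin ab
  have f3 : (2 * m) * ‖ab - abs‖ ≤ B :=
    aux_dist (by positivity) (hdiffab w) (hsc w) habsmin ab
  have hr : (0:ℝ) ≤ ‖ab - abs‖ := norm_nonneg _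
  have hApos : (0:ℝ) ≤ A := norm_nonneg _
  have hBpos : (0:ℝ) ≤ B := norm_nonneg _
  -- goal reduction
  rw [one_div_mul_eq_div, div_le_iff₀ hMpos]
  by_cases hdg : DifferentiableAt ℝ (fun w' => ⨅ ab', φ w' ab') w
  · -- Danskin: gradient of inf equals partial gradient at the minimizer
    have hloc : IsLocalMin (fun w' => φ w' abs - ⨅ ab', φ w' ab') w := by
      apply Filter.Eventually.of_forall
      intro w'
      have h1 : (⨅ ab', φ w' ab') ≤ φ w' abs := ciInf_le (hbdd w') abs
      simp only []
      rw [hgw]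
      linarith
    have hfd := hloc.fderiv_eq_zero
    have hsub : fderiv ℝ (fun w' => φ w' abs - ⨅ ab', φ w' ab') w
        = fderiv ℝ (fun w' => φ w' abs) w - fderiv ℝ (fun w' => ⨅ ab', φ w' ab') w :=
      fderiv_sub (hdiffw abs w) hdg
    have hfeq : fderiv ℝ (fun w' => ⨅ ab', φ w' ab') w = fderiv ℝ (fun w' => φ w' abs) w := by
      rw [hsub] at hfd
      exact (sub_eq_zero.mp hfd).symm
    have hgrad : gradient (fun w' => ⨅ ab', φ w' ab') w = gradient (fun w' => φ w' abs) w := by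
      unfold gradient
      rw [hfeq]
    set G := ‖gradient (fun w' => ⨅ ab', φ w' ab') w‖ with hGdef
    have hGb : G ≤ A + 2 * Ltil * ‖ab - abs‖ := by
      rw [hGdef, hgrad]
      calc ‖gradient (fun w' => φ w' abs) w‖
          ≤ ‖gradient (fun w' => φ w' ab) w‖
            + ‖gradient (fun w' => φ w' abs) w - gradient (fun w' => φ w' ab) w‖ := by
            have := norm_add_le (gradient (fun w' => φ w' ab) w)
              (gradient (fun w' => φ w' abs) w - gradient (fun w' => φ w' ab) w)
            simpa using this
        _ ≤ A + 2 * Ltil * ‖ab - abs‖ := by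
            have := hlip w abs ab
            rw [norm_sub_rev abs ab] at this
            linarith
    have f2 : μ' * ((⨅ ab', φ w ab') - φ w0 ab0) ≤ 1 / 2 * G ^ 2 := hPL w
    have f5 : m * G ≤ m * A + Ltil * B := by
      nlinarith [mul_le_mul_of_nonneg_left hGb hm.le, mul_le_mul_of_nonneg_left f3 hLtil.le]
    have hGpos : (0:ℝ) ≤ G := norm_nonneg _
    have key := aux_arith m μ' Ltil M (φ w ab - φ w abs) ((⨅ ab', φ w ab') - φ w0 ab0)
      A B G hm hμ' hLtil hM1 hM2 hApos hBpos hGpos f1 f2 f5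
    have hsplit : φ w ab - φ w0 ab0
        = (φ w ab - φ w abs) + ((⨅ ab', φ w ab') - φ w0 ab0) := by
      rw [hgw]; ring
    rw [hsplit]
    linarith [key]
  · -- non-differentiable case: the gradient of the inf is 0
    have hz : gradient (fun w' => ⨅ ab', φ w' ab') w = 0 :=
      gradient_eq_zero_of_not_differentiableAt hdg
    have f2 : μ' * ((⨅ ab', φ w ab') - φ w0 ab0) ≤ 1 / 2 * (0:ℝ) ^ 2 := by
      have h := hPL w
      rw [hz] at h
      simpa using h
    have f5 : m * (0:ℝ) ≤ m * A + Ltil * B := by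
      have : (0:ℝ) ≤ m * A + Ltil * B := by positivity
      simpa using this
    have key := aux_arith m μ' Ltil M (φ w ab - φ w abs) ((⨅ ab', φ w ab') - φ w0 ab0)
      A B 0 hm hμ' hLtil hM1 hM2 hApos hBpos le_rfl f1 f2 f5
    have hsplit : φ w ab - φ w0 ab0
        = (φ w ab - φ w abs) + ((⨅ ab', φ w ab') - φ w0 ab0) := by
      rw [hgw]; ring
    rw [hsplit]
    linarith [key]
end

section
/- Let φ : ℝⁿ → ℝ be L-smooth, satisfy the PL condition μ(φ(v) − φ(v*)) ≤ (1/2)‖∇φ(v)‖², and let φ_k(v) = φ(v) + L‖v − v_{k−1}‖². Then for any v_k, v_{k−1}: φ(v_k) − φ(v_{k−1}) ≤ (1/(4L))‖∇φ_k(v_k)‖² − (μ/(2L))(φ(v_k) − φ(v*)). -/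
open InnerProductSpace

private lemma grad_aux {n : ℕ} (L : ℝ) (φ : EuclideanSpace ℝ (Fin n) → ℝ)
    (hφ : Differentiable ℝ φ) (a x : EuclideanSpace ℝ (Fin n)) :
    HasGradientAt (fun v => φ v + L * ‖v - a‖ ^ 2)
      (gradient φ x + (2 * L) • (x - a)) x := by
  have hid : HasFDerivAt (fun v : EuclideanSpace ℝ (Fin n) => v - a)
      (ContinuousLinearMap.id ℝ _) x := (hasFDerivAt_id x).sub_const a
  have h2 := (hid.inner ℝ hid).const_mul L
  have h3 := ((hφ x).hasFDerivAt).add h2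
  rw [hasGradientAt_iff_hasFDerivAt]
  have h4 : (fun v : EuclideanSpace ℝ (Fin n) => φ v + L * ‖v - a‖ ^ 2)
      = fun v => φ v + L * (inner ℝ (v - a) (v - a) : ℝ) := by
    funext v; rw [real_inner_self_eq_norm_sq]
  rw [h4]
  refine h3.congr_fderiv ?_
  ext y
  simp only [ContinuousLinearMap.add_apply, ContinuousLinearMap.smul_apply,
    ContinuousLinearMap.comp_apply, ContinuousLinearMap.prod_apply,
    ContinuousLinearMap.id_apply, fderivInnerCLM_apply, toDual_apply_apply,
    gradient, LinearIsometryEquiv.apply_symm_apply, inner_add_left,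
    real_inner_smul_left, smul_eq_mul, real_inner_comm (x - a) y]
  have : (inner ℝ ((toDual ℝ (EuclideanSpace ℝ (Fin n))).symm (fderiv ℝ φ x)) y : ℝ)
      = fderiv ℝ φ x y := by
    rw [← toDual_apply_apply, LinearIsometryEquiv.apply_symm_apply]
  rw [this]; ring

private lemma descent_aux {n : ℕ} (L : ℝ) (hL : 0 ≤ L)
    (φ : EuclideanSpace ℝ (Fin n) → ℝ) (hφ : Differentiable ℝ φ)
    (hsmooth : ∀ x y, ‖gradient φ x - gradient φ y‖ ≤ L * ‖x - y‖)
    (u v : EuclideanSpace ℝ (Fin n)) :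
    |φ u - φ v - (inner ℝ (gradient φ v) (u - v) : ℝ)| ≤ L * ‖u - v‖ ^ 2 := by
  set g := gradient φ v with hg
  set ψ := fun x : EuclideanSpace ℝ (Fin n) => φ x - (toDual ℝ (EuclideanSpace ℝ (Fin n)) g) x with hψ
  have hfd : ∀ x : EuclideanSpace ℝ (Fin n), HasFDerivAt ψ (fderiv ℝ φ x - toDual ℝ (EuclideanSpace ℝ (Fin n)) g) x :=
    fun x => ((hφ x).hasFDerivAt).sub ((toDual ℝ (EuclideanSpace ℝ (Fin n)) g).hasFDerivAt)
  have hbound : ∀ x ∈ segment ℝ v u, ‖fderiv ℝ φ x - toDual ℝ (EuclideanSpace ℝ (Fin n)) g‖ ≤ L * ‖u - v‖ := by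
    intro x hx
    have h1 : fderiv ℝ φ x - toDual ℝ (EuclideanSpace ℝ (Fin n)) g = toDual ℝ (EuclideanSpace ℝ (Fin n)) (gradient φ x - g) := by
      rw [map_sub]; congr 1
      exact ((toDual ℝ (EuclideanSpace ℝ (Fin n))).apply_symm_apply _).symm
    rw [h1, LinearIsometryEquiv.norm_map]
    have hxv : ‖x - v‖ ≤ ‖u - v‖ := by
      obtain ⟨a, b, ha, hb, hab, rfl⟩ := hx
      have ha' : a = 1 - b := by linarith
      subst ha'
      have heq : (1 - b) • v + b • u - v = b • (u - v) := by module
      rw [heq, norm_smul, Real.norm_eq_abs, abs_of_nonneg hb]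
      nlinarith [norm_nonneg (u - v)]
    calc ‖gradient φ x - g‖ ≤ L * ‖x - v‖ := hsmooth x v
      _ ≤ L * ‖u - v‖ := by gcongr
  have key := (convex_segment v u).norm_image_sub_le_of_norm_hasFDerivWithin_le
      (fun x hx => (hfd x).hasFDerivWithinAt) hbound
      (left_mem_segment ℝ v u) (right_mem_segment ℝ v u)
  have hexp : ψ u - ψ v = φ u - φ v - (inner ℝ g (u - v) : ℝ) := by
    simp only [hψ, toDual_apply_apply, inner_sub_right]
    ring
  rw [Real.norm_eq_abs, hexp] at key
  calc |φ u - φ v - (inner ℝ g (u - v) : ℝ)| ≤ L * ‖u - v‖ * ‖u - v‖ := key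
    _ = L * ‖u - v‖ ^ 2 := by ring


/-- Descent-type inequality under PL: for `L`-smooth `φ` satisfying the PL
condition and `φ_k(v) = φ(v) + L‖v − v_{k−1}‖²`,
`φ(v_k) − φ(v_{k−1}) ≤ (1/(4L))‖∇φ_k(v_k)‖² − (μ/(2L))(φ(v_k) − φ(v*))`. -/
theorem stmt_11 {n : ℕ} (L μ : ℝ) (hL : 0 < L) (hμ : 0 < μ)
    (φ : EuclideanSpace ℝ (Fin n) → ℝ) (hφ : Differentiable ℝ φ)
    (hsmooth : ∀ x y, ‖gradient φ x - gradient φ y‖ ≤ L * ‖x - y‖)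
    (vstar : EuclideanSpace ℝ (Fin n)) (hmin : ∀ v, φ vstar ≤ φ v)
    (hPL : ∀ v, μ * (φ v - φ vstar) ≤ (1 / 2) * ‖gradient φ v‖ ^ 2)
    (vk1 : EuclideanSpace ℝ (Fin n))
    (φk : EuclideanSpace ℝ (Fin n) → ℝ)
    (hφk : ∀ v, φk v = φ v + L * ‖v - vk1‖ ^ 2) :
    ∀ vk, φ vk - φ vk1
        ≤ (1 / (4 * L)) * ‖gradient φk vk‖ ^ 2 - (μ / (2 * L)) * (φ vk - φ vstar) := by
  intro vk
  have hφk' : φk = fun v => φ v + L * ‖v - vk1‖ ^ 2 := funext hφk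
  have hgradk : gradient φk vk = gradient φ vk + (2 * L) • (vk - vk1) := by
    rw [hφk']
    exact (grad_aux L φ hφ vk1 vk).gradient
  set g := gradient φ vk with hgdef
  set d := vk - vk1 with hddef
  -- norm expansion
  have hexp : ‖gradient φk vk‖ ^ 2
      = ‖g‖ ^ 2 + 4 * L * (inner ℝ g d : ℝ) + 4 * L ^ 2 * ‖d‖ ^ 2 := by
    rw [hgradk, norm_add_sq_real, real_inner_smul_right, norm_smul,
      Real.norm_eq_abs]
    rw [mul_pow, sq_abs]
    ring
  -- descent bound
  have hdesc : φ vk - φ vk1 ≤ (inner ℝ g d : ℝ) + L * ‖d‖ ^ 2 := by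
    have h := descent_aux L hL.le φ hφ hsmooth vk1 vk
    have hneg : vk1 - vk = -d := by rw [hddef]; abel
    rw [hneg, inner_neg_right, norm_neg] at h
    have := (abs_le.mp h).1
    linarith
  have hpl := hPL vk
  have hmin' := hmin vk
  have h4L : (0:ℝ) < 4 * L := by linarith
  have hplL : (μ / (2 * L)) * (φ vk - φ vstar) ≤ (1 / (4 * L)) * ‖g‖ ^ 2 := by
    rw [div_mul_eq_mul_div, div_le_iff₀ (by linarith : (0:ℝ) < 2 * L)]
    have : (1 / (4 * L)) * ‖g‖ ^ 2 * (2 * L) = (1/2) * ‖g‖ ^ 2 := by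
      field_simp; ring
    rw [this]
    exact hpl
  rw [hexp]
  have : (1 / (4 * L)) * (‖g‖ ^ 2 + 4 * L * (inner ℝ g d : ℝ) + 4 * L ^ 2 * ‖d‖ ^ 2)
      = (1 / (4 * L)) * ‖g‖ ^ 2 + (inner ℝ g d : ℝ) + L * ‖d‖ ^ 2 := by
    field_simp
  rw [this]
  linarith
end

section
/- Let (Δ_k)_{k≥0} be a nonnegative sequence satisfying (5/2 + μ/(2L))·Δ_k ≤ (5/2)·Δ_{k−1} + 12·η_k·G² for all k ≥ 1, where η_k = η₀·exp(−(k−1)·r) with r = (μ/L)/(5 + μ/L), and μ, L, G, η₀ > 0. Then for all k ≥ 1: Δ_k ≤ exp(−k·r)·Δ₀ + (24/5)·G²·η₀·k·exp(−k·r). -/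
/-- Recursive contraction bound for PPD-SG: if
`(5/2 + μ/(2L)) Δ_k ≤ (5/2) Δ_{k−1} + 12 η_k G²` with
`η_k = η₀ exp(−(k−1)r)`, `r = (μ/L)/(5 + μ/L)`, then
`Δ_k ≤ exp(−kr) Δ₀ + (24/5) G² η₀ k exp(−kr)`. -/
theorem stmt_12 (μ L G η₀ : ℝ) (hμ : 0 < μ) (hL : 0 < L) (hG : 0 < G) (hη : 0 < η₀)
    (Δ : ℕ → ℝ) (hΔ : ∀ k, 0 ≤ Δ k)
    (hrec : ∀ k : ℕ, 1 ≤ k →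
        (5 / 2 + μ / (2 * L)) * Δ k
          ≤ (5 / 2) * Δ (k - 1)
            + 12 * (η₀ * Real.exp (-((k : ℝ) - 1) * ((μ / L) / (5 + μ / L)))) * G ^ 2) :
    ∀ k : ℕ, 1 ≤ k →
      Δ k ≤ Real.exp (-(k : ℝ) * ((μ / L) / (5 + μ / L))) * Δ 0
          + (24 / 5) * G ^ 2 * η₀ * k * Real.exp (-(k : ℝ) * ((μ / L) / (5 + μ / L))) := by
  set κ := μ / L with hκdef
  have hκ : 0 < κ := div_pos hμ hL
  set r := κ / (5 + κ) with hrdef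
  have h5κ : (0:ℝ) < 5 + κ := by linarith
  have hhalf : μ / (2 * L) = κ / 2 := by
    rw [hκdef, div_div, mul_comm]
  have hr1 : 1 - r = 5 / (5 + κ) := by
    rw [hrdef]; field_simp; ring
  have hE : 5 / (5 + κ) ≤ Real.exp (-r) := by
    rw [← hr1]; linarith [Real.add_one_le_exp (-r)]
  have hEpos : 0 < Real.exp (-r) := Real.exp_pos _
  have h5E : 5 ≤ Real.exp (-r) * (5 + κ) := by
    rw [div_le_iff₀ h5κ] at hE; linarith
  have key : ∀ n : ℕ, Δ n ≤ Real.exp (-(n : ℝ) * r) * Δ 0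
      + (24 / 5) * G ^ 2 * η₀ * n * Real.exp (-(n : ℝ) * r) := by
    intro n
    induction n with
    | zero => simp
    | succ n ih =>
      set E := Real.exp (-r) with hEdef
      set En := Real.exp (-(n : ℝ) * r) with hEndef
      have hEnpos : 0 < En := Real.exp_pos _
      have hrec' := hrec (n + 1) (by omega)
      simp only [Nat.add_sub_cancel] at hrec'
      have hcast : ((n + 1 : ℕ) : ℝ) - 1 = (n : ℝ) := by push_cast; ring
      rw [hcast, hhalf] at hrec'
      have step1 : Δ (n + 1) * (5 + κ) ≤ 5 * Δ n + 24 * η₀ * G ^ 2 * En := by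
        linarith
      have a1 : 5 * Δ n ≤ E * (5 + κ) * Δ n :=
        mul_le_mul_of_nonneg_right h5E (hΔ n)
      have a2 : 24 * (η₀ * G ^ 2 * En) ≤ (24 / 5) * (E * (5 + κ)) * (η₀ * G ^ 2 * En) := by
        have hpos : 0 ≤ η₀ * G ^ 2 * En := by positivity
        nlinarith [mul_le_mul_of_nonneg_right h5E hpos]
      have step2 : Δ (n + 1) ≤ E * Δ n + (24 / 5) * E * η₀ * G ^ 2 * En := by
        have h : Δ (n + 1) * (5 + κ) ≤ (E * Δ n + (24 / 5) * E * η₀ * G ^ 2 * En) * (5 + κ) := by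
          nlinarith [a1, a2, step1]
        exact le_of_mul_le_mul_right h h5κ
      have hexp : Real.exp (-((n + 1 : ℕ) : ℝ) * r) = E * En := by
        rw [hEdef, hEndef, ← Real.exp_add]
        push_cast; ring_nf
      rw [hexp]
      push_cast
      nlinarith [mul_le_mul_of_nonneg_left ih (le_of_lt hEpos), step2, hEnpos, hEpos]
  intro k _
  exact key k
end

section
/- Let g₁,…,g_T ∈ ℝ^d and define for each coordinate i, s_{t,i} = ‖(g_{1,i},…,g_{t,i})‖₂ (the ℓ₂ norm of the history of coordinate i), and H_t = δI + diag(s_t) with δ ≥ max_t ‖g_t‖_∞. Then Σ_{t=1}^{T} ‖g_t‖²_{H_{t−1}^{−1}} ≤ 2·Σ_{i=1}^{d} ‖(g_{1,i},…,g_{T,i})‖₂, where ‖x‖²_{H^{−1}} = xᵀH^{−1}x and H₀ = δI. -/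
/-!
Fix a coordinate with history `a₁, a₂, …` and partial sums `Sₜ = a₁² + ⋯ + aₜ²`. Since `|aₜ| ≤ δ`,
`√Sₜ ≤ √Sₜ₋₁ + δ`, hence `aₜ² = (√Sₜ - √Sₜ₋₁)(√Sₜ + √Sₜ₋₁) ≤ 2 (√Sₜ - √Sₜ₋₁)(δ + √Sₜ₋₁)`.
The resulting bounds `aₜ² / (δ + √Sₜ₋₁) ≤ 2 (√Sₜ - √Sₜ₋₁)` telescope to `2 √S_T`.
-/

open Finset Real

lemma sq_div_add_sqrt_le_two_mul_sqrt_sub {S a δ : ℝ} (hS : 0 ≤ S) (ha : |a| ≤ δ) :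
    a ^ 2 / (δ + √S) ≤ 2 * (√(S + a ^ 2) - √S) := by
  rcases eq_or_ne a 0 with rfl | ha0
  · simp
  have hδ : 0 < δ := (abs_pos.mpr ha0).trans_le ha
  have hu : 0 ≤ √S := sqrt_nonneg S
  have hu2 : √S ^ 2 = S := sq_sqrt hS
  have hv2 : √(S + a ^ 2) ^ 2 = S + a ^ 2 := sq_sqrt (by positivity)
  have hvu : √S ≤ √(S + a ^ 2) := sqrt_le_sqrt (by nlinarith)
  have hvδ : √(S + a ^ 2) ≤ √S + δ := by
    rw [sqrt_le_left (by positivity)]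
    nlinarith [sq_abs a, abs_nonneg a]
  rw [div_le_iff₀ (by positivity)]
  nlinarith [mul_nonneg (sub_nonneg.mpr hvu) (sub_nonneg.mpr hvδ)]

lemma sum_sq_div_add_sqrt_le_two_mul_sqrt {T : ℕ} {δ : ℝ} (a : ℕ → ℝ)
    (ha : ∀ t, t < T → |a t| ≤ δ) :
    ∑ t ∈ range T, a t ^ 2 / (δ + √(∑ j ∈ range t, a j ^ 2))
      ≤ 2 * √(∑ t ∈ range T, a t ^ 2) := by
  calc ∑ t ∈ range T, a t ^ 2 / (δ + √(∑ j ∈ range t, a j ^ 2))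
      ≤ ∑ t ∈ range T, 2 * (√(∑ j ∈ range (t + 1), a j ^ 2) - √(∑ j ∈ range t, a j ^ 2)) := by
        refine sum_le_sum fun t ht => ?_
        rw [sum_range_succ]
        exact sq_div_add_sqrt_le_two_mul_sqrt_sub (sum_nonneg fun _ _ => sq_nonneg _)
          (ha t (mem_range.mp ht))
    _ = 2 * √(∑ t ∈ range T, a t ^ 2) := by
        rw [← mul_sum, sum_range_sub (fun t => √(∑ j ∈ range t, a j ^ 2))]
        simp

theorem stmt_19_general (d T : ℕ) (δ : ℝ) (g : ℕ → Fin d → ℝ)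
    (hδ : ∀ t, t < T → ∀ i, |g t i| ≤ δ) :
    ∑ t ∈ Finset.range T, ∑ i : Fin d,
        (g t i) ^ 2 / (δ + Real.sqrt (∑ j ∈ Finset.range t, (g j i) ^ 2))
      ≤ 2 * ∑ i : Fin d, Real.sqrt (∑ t ∈ Finset.range T, (g t i) ^ 2) := by
  rw [sum_comm, mul_sum]
  exact sum_le_sum fun i _ =>
    sum_sq_div_add_sqrt_le_two_mul_sqrt (fun t => g t i) fun t ht => hδ t ht i

/-- AdaGrad potential inequality with lagged diagonal scaling `H_{t−1} = δI + diag(s_{t−1})`,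
`s_{t,i} = ‖(g_{1,i},…,g_{t,i})‖₂`, for `δ ≥ max_t ‖g_t‖_∞`:
`Σ_t ‖g_t‖²_{H_{t−1}⁻¹} ≤ 2 Σ_i ‖(g_{1,i},…,g_{T,i})‖₂`. -/
theorem stmt_19 (d T : ℕ) (δ : ℝ) (hδ0 : 0 ≤ δ) (g : ℕ → Fin d → ℝ)
    (hδ : ∀ t, t < T → ∀ i, |g t i| ≤ δ) :
    ∑ t ∈ Finset.range T, ∑ i : Fin d,
        (g t i) ^ 2 / (δ + Real.sqrt (∑ j ∈ Finset.range t, (g j i) ^ 2))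
      ≤ 2 * ∑ i : Fin d, Real.sqrt (∑ t ∈ Finset.range T, (g t i) ^ 2) :=
  stmt_19_general d T δ g hδ
end
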